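/- arXiv:2403.19526 — 2 statements merged into one kernel-verified Lean document; each statement's English description precedes it below -/
import Mathlib

section
/- Let P be an interval ipomset with sparse step decomposition P = P₁ * ⋯ * Pₙ, and let St, Te be defined as the step indices starting and terminating each event (with St(e) = −∞ for sources and Te(e) = +∞ for targets). Then for all events x, y of P: Te(x) < St(y) if and only if x <_P y. -/
set_option autoImplicit false

/-! ## Ipomsets (pomsets with interfaces) over an alphabet Λ, with events drawn from ℕ -/

structure Ipomset (Λ : Type) : Type where
  E : Finset ℕ
  lt : ℕ → ℕ → Prop
  evord : ℕ → ℕ → Prop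
  S : Finset ℕ
  T : Finset ℕ
  lab : ℕ → Λ
  S_sub : S ⊆ E
  T_sub : T ⊆ E
  lt_dom : ∀ a b, lt a b → a ∈ E ∧ b ∈ E
  evord_dom : ∀ a b, evord a b → a ∈ E ∧ b ∈ E
  lt_irrefl : ∀ e, ¬ lt e e
  lt_trans : ∀ a b c, lt a b → lt b c → lt a c
  evord_irrefl : ∀ e, ¬ evord e e
  evord_asymm : ∀ a b, evord a b → ¬ evord b a
  lt_evord : ∀ a b, lt a b → ¬ evord a b ∧ ¬ evord b a
  total : ∀ e ∈ E, ∀ e' ∈ E, e ≠ e' → lt e e' ∨ lt e' e ∨ evord e e' ∨ evord e' e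
  S_min : ∀ e ∈ S, ∀ e', ¬ lt e' e
  T_max : ∀ e ∈ T, ∀ e', ¬ lt e e'

namespace Ipomset

variable {Λ : Type}

/-- An ipomset is interval if its precedence order admits an interval representation. -/
def Interval (P : Ipomset Λ) : Prop :=
  ∃ f g : ℕ → ℝ, (∀ e ∈ P.E, f e ≤ g e) ∧
    (∀ e₁ ∈ P.E, ∀ e₂ ∈ P.E, (P.lt e₁ e₂ ↔ g e₁ < f e₂))

/-- Discrete: empty precedence order. -/
def Discrete (P : Ipomset Λ) : Prop := ∀ a b, ¬ P.lt a b

/-- A starter is a discrete ipomset all of whose events are targets. -/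
def IsStarter (P : Ipomset Λ) : Prop := P.Discrete ∧ P.T = P.E

/-- A terminator is a discrete ipomset all of whose events are sources. -/
def IsTerminator (P : Ipomset Λ) : Prop := P.Discrete ∧ P.S = P.E

/-- An identity is both a starter and a terminator. -/
def IsId (P : Ipomset Λ) : Prop := P.IsStarter ∧ P.IsTerminator

/-- The width of an ipomset: the cardinality of a largest `<`-antichain. -/
noncomputable def width (P : Ipomset Λ) : ℕ :=
  sSup {n | ∃ A : Finset ℕ, A ⊆ P.E ∧ (∀ a ∈ A, ∀ b ∈ A, ¬ P.lt a b) ∧ A.card = n}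

/-- `P.Subsumes Q` means `P ⊑ Q` : `Q` subsumes `P`. -/
def Subsumes (P Q : Ipomset Λ) : Prop :=
  ∃ f : ℕ → ℕ, Set.BijOn f ↑P.E ↑Q.E ∧
    (∀ e ∈ P.E, (e ∈ P.S ↔ f e ∈ Q.S)) ∧
    (∀ e ∈ P.E, (e ∈ P.T ↔ f e ∈ Q.T)) ∧
    (∀ e ∈ P.E, Q.lab (f e) = P.lab e) ∧
    (∀ e₁ ∈ P.E, ∀ e₂ ∈ P.E, Q.lt (f e₁) (f e₂) → P.lt e₁ e₂) ∧
    (∀ e₁ ∈ P.E, ∀ e₂ ∈ P.E, P.evord e₁ e₂ → Q.evord (f e₁) (f e₂))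

/-- `f` is an isomorphism of ipomsets from `P` to `Q`. -/
def IsIso (P Q : Ipomset Λ) (f : ℕ → ℕ) : Prop :=
  Set.BijOn f ↑P.E ↑Q.E ∧
    (∀ e ∈ P.E, (e ∈ P.S ↔ f e ∈ Q.S)) ∧
    (∀ e ∈ P.E, (e ∈ P.T ↔ f e ∈ Q.T)) ∧
    (∀ e ∈ P.E, Q.lab (f e) = P.lab e) ∧
    (∀ e₁ ∈ P.E, ∀ e₂ ∈ P.E, (P.lt e₁ e₂ ↔ Q.lt (f e₁) (f e₂))) ∧
    (∀ e₁ ∈ P.E, ∀ e₂ ∈ P.E, (P.evord e₁ e₂ ↔ Q.evord (f e₁) (f e₂)))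

def Isomorphic (P Q : Ipomset Λ) : Prop := ∃ f, IsIso P Q f

end Ipomset

/-- Subsumption closure of a set of ipomsets. -/
def downc {Λ : Type} (L : Set (Ipomset Λ)) : Set (Ipomset Λ) :=
  {P | ∃ Q ∈ L, P.Subsumes Q}

/-! ## Gluing composition -/

/-- The base relation whose transitive closure is the precedence of a gluing `P * Q`. -/
def glueBase {Λ : Type} (P Q : Ipomset Λ) : ℕ → ℕ → Prop := fun a b =>
  P.lt a b ∨ Q.lt a b ∨ (a ∈ P.E ∧ a ∉ P.T ∧ b ∈ Q.E ∧ b ∉ Q.S)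

/-- `IsGluing P Q R` : the gluing `P * Q` is defined and equals `R`
(events of the target interface of `P` are literally identified with those of the
source interface of `Q`). -/
structure IsGluing {Λ : Type} (P Q R : Ipomset Λ) : Prop where
  match_TS : P.T = Q.S
  inter : ∀ e, e ∈ P.E → e ∈ Q.E → e ∈ P.T
  evord_agree : ∀ a ∈ P.T, ∀ b ∈ P.T, (P.evord a b ↔ Q.evord a b)
  lab_agree : ∀ e ∈ P.T, P.lab e = Q.lab e
  E_eq : R.E = P.E ∪ Q.E
  S_eq : R.S = P.S
  T_eq : R.T = Q.T
  lab_P : ∀ e ∈ P.E, R.lab e = P.lab e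
  lab_Q : ∀ e ∈ Q.E, R.lab e = Q.lab e
  evord_eq : ∀ a b, (R.evord a b ↔ P.evord a b ∨ Q.evord a b)
  lt_eq : ∀ a b, (R.lt a b ↔ Relation.TransGen (glueBase P Q) a b)

/-- `IsGluingList [P₁, …, Pₙ] P` : the iterated gluing `P₁ * ⋯ * Pₙ` is defined and equals `P`. -/
inductive IsGluingList {Λ : Type} : List (Ipomset Λ) → Ipomset Λ → Prop
  | single (P : Ipomset Λ) : IsGluingList [P] P
  | cons {P Q R : Ipomset Λ} {l : List (Ipomset Λ)} :
      IsGluingList l Q → IsGluing P Q R → IsGluingList (P :: l) R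

/-! ## Step decompositions -/

/-- A step decomposition of `P`: a presentation of `P` as a gluing of starters and
terminators. -/
def IsStepDecomp {Λ : Type} (l : List (Ipomset Λ)) (P : Ipomset Λ) : Prop :=
  l ≠ [] ∧ (∀ Q ∈ l, Q.IsStarter ∨ Q.IsTerminator) ∧ IsGluingList l P

/-- Starters and terminators alternate along the list. -/
def Alternating {Λ : Type} (l : List (Ipomset Λ)) : Prop :=
  List.Chain'
    (fun A B => ¬(A.IsStarter ∧ B.IsStarter) ∧ ¬(A.IsTerminator ∧ B.IsTerminator)) l

def IsSparseDecomp {Λ : Type} (l : List (Ipomset Λ)) (P : Ipomset Λ) : Prop :=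
  IsStepDecomp l P ∧ Alternating l

/-! ## Discrete steps as letters (for words over Ω) -/

/-- A letter denoting a starter (`isUp = true`) or terminator (`isUp = false`) with
conclist `U` (a list of labels, in event order) which starts/terminates the events at
the positions in `A`. -/
structure StepLetter (Λ : Type) : Type where
  U : List Λ
  A : Finset ℕ
  isUp : Bool

/-- The letter is well-formed (the started/terminated events are positions of `U`). -/
def ValidLetter {Λ : Type} (s : StepLetter Λ) : Prop := ∀ a ∈ s.A, a < s.U.length

/-- The letter is a well-formed element of `Ω_{≤ k}`. -/
def ValidLetterLe {Λ : Type} (k : ℕ) (s : StepLetter Λ) : Prop :=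
  ValidLetter s ∧ s.U.length ≤ k

/-- `g` enumerates the set `V` of events of `P` as the conclist `U` (in event order,
with matching labels). -/
def ConclistOf {Λ : Type} (P : Ipomset Λ) (V : Set ℕ) (U : List Λ) (g : ℕ → ℕ) : Prop :=
  Set.BijOn g (Set.Iio U.length) V ∧
    (∀ i : Fin U.length, P.lab (g i.1) = U.get i) ∧
    (∀ i j : ℕ, i < j → j < U.length → P.evord (g i) (g j))

/-- The discrete ipomset `D` realises the letter `s`. -/
def LetterMatches {Λ : Type} (s : StepLetter Λ) (D : Ipomset Λ) : Prop :=
  (if s.isUp then D.IsStarter else D.IsTerminator) ∧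
  ∃ g : ℕ → ℕ, ConclistOf D ↑D.E s.U g ∧
    ∀ i < s.U.length, (i ∈ s.A ↔ g i ∉ (if s.isUp then D.S else D.T))

/-- The word `w` of letters glues to the ipomset `P`. -/
def WordMatches {Λ : Type} (w : List (StepLetter Λ)) (P : Ipomset Λ) : Prop :=
  ∃ l : List (Ipomset Λ), List.Forall₂ LetterMatches w l ∧ IsGluingList l P

/-! ## Higher-dimensional automata -/

/-- Remove from the list `U` the entries at positions in `A`. -/
def removeIdx {Λ : Type} (U : List Λ) (A : Finset ℕ) : List Λ :=
  (List.range U.length).filterMap (fun i => if i ∈ A then none else U[i]?)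

/-- Positions of the elements of `A` after the elements at positions in `B` are removed. -/
def reindex (B A : Finset ℕ) : Finset ℕ :=
  A.image (fun a => a - (B.filter (· < a)).card)

/-- A higher-dimensional automaton: a finite precubical set (cells with conclists of
active events and lower/upper face maps, `face false` = δ⁰ and `face true` = δ¹)
with start and accept cells. -/
structure HDA (Λ : Type) : Type 1 where
  Cell : Type
  fin : Fintype Cell
  ev : Cell → List Λ
  face : Bool → Finset ℕ → Cell → Cell
  face_ev : ∀ ν A q, (∀ a ∈ A, a < (ev q).length) →
      ev (face ν A q) = removeIdx (ev q) A
  face_comm : ∀ ν μ A B q, (∀ a ∈ A, a < (ev q).length) → (∀ b ∈ B, b < (ev q).length) →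
      Disjoint A B →
      face ν (reindex B A) (face μ B q) = face μ (reindex A B) (face ν A q)
  start : Set Cell
  accept : Set Cell

namespace HDA

variable {Λ : Type}

/-- Paths in an HDA, together with the word of starter/terminator letters they induce
(a single cell contributes its identity letter; an upstep from `δ⁰_A(q)` to `q`
contributes the starter on `ev q` starting `A`; a downstep from `q` to `δ¹_A(q)`
contributes the terminator on `ev q` terminating `A`). -/
inductive Path (H : HDA Λ) : H.Cell → H.Cell → List (StepLetter Λ) → Prop
  | nil (q : H.Cell) : Path H q q [⟨H.ev q, ∅, true⟩]
  | up {p : H.Cell} {w : List (StepLetter Λ)} (r : H.Cell) (A : Finset ℕ)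
      (hA : ∀ a ∈ A, a < (H.ev r).length) :
      Path H r p w → Path H (H.face false A r) p (⟨H.ev r, A, true⟩ :: w)
  | down {p : H.Cell} {w : List (StepLetter Λ)} (q : H.Cell) (A : Finset ℕ)
      (hA : ∀ a ∈ A, a < (H.ev q).length) :
      Path H (H.face true A q) p w → Path H q p (⟨H.ev q, A, false⟩ :: w)

/-- The language of an HDA: all ipomsets arising as gluings of the words of letters of
accepting paths. -/
def Lang (H : HDA Λ) : Set (Ipomset Λ) :=
  {P | ∃ q p w, q ∈ H.start ∧ p ∈ H.accept ∧ Path H q p w ∧ WordMatches w P}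

/-- The dimension of an HDA. -/
noncomputable def dim (H : HDA Λ) : ℕ :=
  letI := H.fin
  Finset.univ.sup (fun q => (H.ev q).length)

/-- An upstep of an HDA: `(δ⁰_A(q), ↗A, q)`. -/
structure UpStep (H : HDA Λ) : Type where
  cell : H.Cell
  A : Finset ℕ
  valid : ∀ a ∈ A, a < (H.ev cell).length

def UpStep.src {H : HDA Λ} (u : H.UpStep) : H.Cell := H.face false u.A u.cell
def UpStep.tgt {H : HDA Λ} (u : H.UpStep) : H.Cell := u.cell

/-- A downstep of an HDA: `(q, ↘A, δ¹_A(q))`. -/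
structure DownStep (H : HDA Λ) : Type where
  cell : H.Cell
  A : Finset ℕ
  valid : ∀ a ∈ A, a < (H.ev cell).length

def DownStep.src {H : HDA Λ} (d : H.DownStep) : H.Cell := d.cell
def DownStep.tgt {H : HDA Λ} (d : H.DownStep) : H.Cell := H.face true d.A d.cell

end HDA

/-- A set of ipomsets is regular if it is the language of a finite HDA. -/
def Regular {Λ : Type} (L : Set (Ipomset Λ)) : Prop := ∃ H : HDA Λ, HDA.Lang H = L

/-! ## Rational languages -/

/-- Rational languages: generated from ∅, {id_∅} and discrete ipomsets by union,
gluing composition and Kleene plus, each operation followed by closure under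
subsumption. -/
inductive Rational {Λ : Type} : Set (Ipomset Λ) → Prop
  | empty : Rational ∅
  | emptyId : Rational {P : Ipomset Λ | P.E = ∅}
  | single (D : Ipomset Λ) (hD : D.Discrete) :
      Rational (downc {P | Ipomset.Isomorphic P D})
  | union {L₁ L₂ : Set (Ipomset Λ)} : Rational L₁ → Rational L₂ →
      Rational (downc (L₁ ∪ L₂))
  | glue {L₁ L₂ : Set (Ipomset Λ)} : Rational L₁ → Rational L₂ →
      Rational (downc {R | ∃ P ∈ L₁, ∃ Q ∈ L₂, IsGluing P Q R})
  | plus {L : Set (Ipomset Λ)} : Rational L →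
      Rational (downc {R | ∃ l : List (Ipomset Λ), l ≠ [] ∧ (∀ Q ∈ l, Q ∈ L) ∧ IsGluingList l R})

/-! ## MSO over ipomsets -/

/-- MSO formulas over the signature `{<, ⇝, (a)_{a ∈ Λ}, s, t}`; first- and second-order
variables are indexed by ℕ. -/
inductive MSO (Λ : Type) : Type
  | lt : ℕ → ℕ → MSO Λ
  | ev : ℕ → ℕ → MSO Λ
  | lab : Λ → ℕ → MSO Λ
  | src : ℕ → MSO Λ
  | tgt : ℕ → MSO Λ
  | mem : ℕ → ℕ → MSO Λ
  | not : MSO Λ → MSO Λ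
  | and : MSO Λ → MSO Λ → MSO Λ
  | exFO : ℕ → MSO Λ → MSO Λ
  | exSO : ℕ → MSO Λ → MSO Λ

namespace MSO

variable {Λ : Type}

/-- Satisfaction of an MSO formula in an ipomset, under first- and second-order
valuations. -/
def Sat (P : Ipomset Λ) : MSO Λ → (ℕ → ℕ) → (ℕ → Set ℕ) → Prop
  | .lt x y, ν, _ => P.lt (ν x) (ν y)
  | .ev x y, ν, _ => P.evord (ν x) (ν y)
  | .lab a x, ν, _ => ν x ∈ P.E ∧ P.lab (ν x) = a
  | .src x, ν, _ => ν x ∈ P.S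
  | .tgt x, ν, _ => ν x ∈ P.T
  | .mem x X, ν, μ => ν x ∈ μ X
  | .not φ, ν, μ => ¬ Sat P φ ν μ
  | .and φ ψ, ν, μ => Sat P φ ν μ ∧ Sat P ψ ν μ
  | .exFO x φ, ν, μ => ∃ e ∈ P.E, Sat P φ (Function.update ν x e) μ
  | .exSO X φ, ν, μ => ∃ A : Set ℕ, A ⊆ ↑P.E ∧ Sat P φ ν (Function.update μ X A)

/-- Free first-order variables. -/
def fv1 : MSO Λ → Finset ℕ
  | .lt x y => {x, y}
  | .ev x y => {x, y}
  | .lab _ x => {x}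
  | .src x => {x}
  | .tgt x => {x}
  | .mem x _ => {x}
  | .not φ => fv1 φ
  | .and φ ψ => fv1 φ ∪ fv1 ψ
  | .exFO x φ => fv1 φ \ {x}
  | .exSO _ φ => fv1 φ

/-- Free second-order variables. -/
def fv2 : MSO Λ → Finset ℕ
  | .mem _ X => {X}
  | .not φ => fv2 φ
  | .and φ ψ => fv2 φ ∪ fv2 ψ
  | .exFO _ φ => fv2 φ
  | .exSO X φ => fv2 φ \ {X}
  | _ => ∅

/-- A sentence: a formula with no free variables. -/
def Closed (φ : MSO Λ) : Prop := φ.fv1 = ∅ ∧ φ.fv2 = ∅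

/-- Satisfaction of a sentence. -/
def Models (P : Ipomset Λ) (φ : MSO Λ) : Prop :=
  Sat P φ (fun _ => 0) (fun _ => ∅)

end MSO

/-- A set of interval ipomsets is MSO-definable if it is the set of interval ipomsets
satisfying some MSO sentence. -/
def MSODefinable {Λ : Type} (L : Set (Ipomset Λ)) : Prop :=
  ∃ φ : MSO Λ, φ.Closed ∧ L = {P | P.Interval ∧ MSO.Models P φ}

/-! ## MSO over words -/

/-- MSO formulas over words on the alphabet `Γ`. -/
inductive WMSO (Γ : Type) : Type
  | letter : Γ → ℕ → WMSO Γ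
  | lt : ℕ → ℕ → WMSO Γ
  | mem : ℕ → ℕ → WMSO Γ
  | not : WMSO Γ → WMSO Γ
  | and : WMSO Γ → WMSO Γ → WMSO Γ
  | exFO : ℕ → WMSO Γ → WMSO Γ
  | exSO : ℕ → WMSO Γ → WMSO Γ

namespace WMSO

variable {Γ : Type}

/-- Satisfaction of a word MSO formula in a word `w : List Γ`. -/
def Sat (w : List Γ) : WMSO Γ → (ℕ → ℕ) → (ℕ → Set ℕ) → Prop
  | .letter a x, ν, _ => w[ν x]? = some a
  | .lt x y, ν, _ => ν x < ν y
  | .mem x X, ν, μ => ν x ∈ μ X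
  | .not φ, ν, μ => ¬ Sat w φ ν μ
  | .and φ ψ, ν, μ => Sat w φ ν μ ∧ Sat w ψ ν μ
  | .exFO x φ, ν, μ => ∃ i < w.length, Sat w φ (Function.update ν x i) μ
  | .exSO X φ, ν, μ => ∃ A : Set ℕ, A ⊆ Set.Iio w.length ∧ Sat w φ ν (Function.update μ X A)

def fv1 : WMSO Γ → Finset ℕ
  | .letter _ x => {x}
  | .lt x y => {x, y}
  | .mem x _ => {x}
  | .not φ => fv1 φ
  | .and φ ψ => fv1 φ ∪ fv1 ψ
  | .exFO x φ => fv1 φ \ {x}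
  | .exSO _ φ => fv1 φ

def fv2 : WMSO Γ → Finset ℕ
  | .mem _ X => {X}
  | .not φ => fv2 φ
  | .and φ ψ => fv2 φ ∪ fv2 ψ
  | .exFO _ φ => fv2 φ
  | .exSO X φ => fv2 φ \ {X}
  | _ => ∅

def Closed (φ : WMSO Γ) : Prop := φ.fv1 = ∅ ∧ φ.fv2 = ∅

def Models (w : List Γ) (φ : WMSO Γ) : Prop :=
  Sat w φ (fun _ => 0) (fun _ => ∅)

end WMSO

/-! ## Step indices in a step decomposition -/

/-- The (1-indexed) step at which event `e` is started in the decomposition `l` of `P`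
(`⊥ = −∞` for source events). -/
noncomputable def StIdx {Λ : Type} (P : Ipomset Λ) (l : List (Ipomset Λ)) (e : ℕ) : EReal :=
  if e ∈ P.S then ⊥
  else sInf {x : EReal | ∃ ℓ : Fin l.length, e ∈ (l.get ℓ).E ∧ x = ((ℓ : ℕ) : EReal) + 1}

/-- The (1-indexed) step at which event `e` is terminated in the decomposition `l` of `P`
(`⊤ = +∞` for target events). -/
noncomputable def TeIdx {Λ : Type} (P : Ipomset Λ) (l : List (Ipomset Λ)) (e : ℕ) : EReal :=
  if e ∈ P.T then ⊤
  else sSup {x : EReal | ∃ ℓ : Fin l.length, e ∈ (l.get ℓ).E ∧ x = ((ℓ : ℕ) : EReal) + 1}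

/-- Select `St` (`true`) or `Te` (`false`). -/
noncomputable def selIdx {Λ : Type} (P : Ipomset Λ) (l : List (Ipomset Λ)) (f : Bool)
    (e : ℕ) : EReal :=
  if f then StIdx P l e else TeIdx P l e

/-!
In a gluing `P * Q` with `P` discrete, a precedence `x < y` either lies inside `Q` or crosses the
seam: `x` is terminated in `P` and `y` is started in `Q`. Inducting along a decomposition into
discrete steps, `x < y` therefore holds exactly when every step containing `x` comes strictly
before every step containing `y`; for a finite nonempty set of steps this compares the last step
of `x` with the first step of `y`, which is `Te(x) < St(y)`.
-/

section StepIndices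

variable {Λ : Type}

/-- Steps are counted from `0` here, whereas `StIdx` and `TeIdx` count them from `1`. -/
def stepsWith (l : List (Ipomset Λ)) (e : ℕ) : Set ℕ :=
  {i | ∃ h : i < l.length, e ∈ l[i].E}

theorem stepsWith_finite (l : List (Ipomset Λ)) (e : ℕ) : (stepsWith l e).Finite :=
  (Set.finite_Iio l.length).subset fun _ ⟨h, _⟩ => h

@[simp]
theorem zero_mem_stepsWith_cons {P : Ipomset Λ} {l : List (Ipomset Λ)} {e : ℕ} :
    0 ∈ stepsWith (P :: l) e ↔ e ∈ P.E :=
  ⟨fun ⟨_, he⟩ => he, fun he => ⟨Nat.succ_pos _, he⟩⟩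

@[simp]
theorem succ_mem_stepsWith_cons {P : Ipomset Λ} {l : List (Ipomset Λ)} {e i : ℕ} :
    i + 1 ∈ stepsWith (P :: l) e ↔ i ∈ stepsWith l e :=
  ⟨fun ⟨h, he⟩ => ⟨Nat.lt_of_succ_lt_succ h, he⟩, fun ⟨h, he⟩ => ⟨Nat.succ_lt_succ h, he⟩⟩

theorem image_stepsWith (l : List (Ipomset Λ)) (e : ℕ) :
    (fun i : ℕ => (i : EReal) + 1) '' stepsWith l e =
      {x : EReal | ∃ ℓ : Fin l.length, e ∈ (l.get ℓ).E ∧ x = ((ℓ : ℕ) : EReal) + 1} := by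
  ext v
  constructor
  · rintro ⟨i, ⟨hi, he⟩, rfl⟩
    exact ⟨⟨i, hi⟩, he, rfl⟩
  · rintro ⟨ℓ, he, rfl⟩
    exact ⟨ℓ, ⟨ℓ.2, he⟩, rfl⟩

theorem forall_stepsWith_cons_lt_iff {P : Ipomset Λ} {l : List (Ipomset Λ)} {x y : ℕ}
    (hx : (stepsWith (P :: l) x).Nonempty) :
    (∀ i ∈ stepsWith (P :: l) x, ∀ j ∈ stepsWith (P :: l) y, i < j) ↔
      y ∉ P.E ∧ ∀ i ∈ stepsWith l x, ∀ j ∈ stepsWith l y, i < j := by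
  constructor
  · intro h
    refine ⟨fun hy => ?_, fun i hi j hj => ?_⟩
    · obtain ⟨i, hi⟩ := hx
      exact Nat.not_lt_zero i (h i hi 0 (zero_mem_stepsWith_cons.mpr hy))
    · exact Nat.succ_lt_succ_iff.mp
        (h (i + 1) (succ_mem_stepsWith_cons.mpr hi) (j + 1) (succ_mem_stepsWith_cons.mpr hj))
  · rintro ⟨hy, h⟩ i hi (_ | j) hj
    · exact absurd (zero_mem_stepsWith_cons.mp hj) hy
    · rcases i with _ | i
      · exact Nat.succ_pos j
      · exact Nat.succ_lt_succ (h i (succ_mem_stepsWith_cons.mp hi) j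
          (succ_mem_stepsWith_cons.mp hj))

theorem sSup_image_lt_sInf_image_iff {α β : Type*} [LinearOrder α] [CompleteLinearOrder β]
    {f : α → β} (hf : StrictMono f) {A B : Set α} (hA : A.Finite) (hA' : A.Nonempty)
    (hB : B.Finite) (hB' : B.Nonempty) :
    sSup (f '' A) < sInf (f '' B) ↔ ∀ a ∈ A, ∀ b ∈ B, a < b := by
  constructor
  · intro h a ha b hb
    refine hf.lt_iff_lt.mp ?_
    calc f a ≤ sSup (f '' A) := le_sSup (Set.mem_image_of_mem f ha)
      _ < sInf (f '' B) := h
      _ ≤ f b := sInf_le (Set.mem_image_of_mem f hb)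
  · intro h
    obtain ⟨a, ha, hfa⟩ := (hA'.image f).csSup_mem (hA.image f)
    obtain ⟨b, hb, hfb⟩ := (hB'.image f).csInf_mem (hB.image f)
    rw [← hfa, ← hfb]
    exact hf (h a ha b hb)

namespace IsGluing

variable {P Q R : Ipomset Λ}

theorem not_mem_left_iff (hg : IsGluing P Q R) {y : ℕ} (hy : y ∈ R.E) :
    y ∉ P.E ↔ y ∈ Q.E ∧ y ∉ Q.S := by
  rw [hg.E_eq, Finset.mem_union] at hy
  constructor
  · intro hyP
    exact ⟨hy.resolve_left hyP, fun hyS => hyP (P.T_sub (hg.match_TS ▸ hyS))⟩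
  · rintro ⟨hyQ, hyS⟩ hyP
    exact hyS (hg.match_TS ▸ hg.inter y hyP hyQ)

theorem not_mem_right_iff (hg : IsGluing P Q R) {x : ℕ} (hx : x ∈ R.E) :
    x ∉ Q.E ↔ x ∈ P.E ∧ x ∉ P.T := by
  rw [hg.E_eq, Finset.mem_union] at hx
  constructor
  · intro hxQ
    exact ⟨hx.resolve_right hxQ, fun hxT => hxQ (Q.S_sub (hg.match_TS ▸ hxT))⟩
  · rintro ⟨hxP, hxT⟩ hxQ
    exact hxT (hg.inter x hxP hxQ)

/-- A chain of `glueBase P Q`-steps cannot return to `P` once it has entered `Q`, and has no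
steps inside the discrete `P`. -/
theorem lt_iff_of_discrete (hg : IsGluing P Q R) (hP : P.Discrete) {x y : ℕ} :
    R.lt x y ↔ Q.lt x y ∨ (x ∈ P.E ∧ x ∉ P.T ∧ y ∈ Q.E ∧ y ∉ Q.S) := by
  rw [hg.lt_eq]
  refine ⟨fun h => ?_, fun h => .single (Or.inr h)⟩
  induction h with
  | single hxy => exact hxy.resolve_left (hP _ _)
  | @tail b c _ hbc ih =>
    have hbQ : b ∈ Q.E ∧ b ∉ Q.S := by
      rcases ih with hxb | ⟨-, -, hbQ⟩
      · exact ⟨(Q.lt_dom _ _ hxb).2, fun hbS => Q.S_min b hbS x hxb⟩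
      · exact hbQ
    have hbc : Q.lt b c := by
      rcases hbc with hbc | hbc | ⟨hbP, hbT, -⟩
      · exact absurd hbc (hP _ _)
      · exact hbc
      · exact absurd (hg.inter b hbP hbQ.1) hbT
    rcases ih with hxb | ⟨hxP, hxT, -⟩
    · exact Or.inl (Q.lt_trans _ _ _ hxb hbc)
    · exact Or.inr ⟨hxP, hxT, (Q.lt_dom _ _ hbc).2, fun hcS => Q.S_min c hcS b hbc⟩

end IsGluing

namespace IsGluingList

variable {l : List (Ipomset Λ)} {R : Ipomset Λ}

theorem mem_E_iff (h : IsGluingList l R) (e : ℕ) : e ∈ R.E ↔ (stepsWith l e).Nonempty := by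
  induction h with
  | single P =>
    refine ⟨fun he => ⟨0, zero_mem_stepsWith_cons.mpr he⟩, ?_⟩
    rintro ⟨i, hi, he⟩
    obtain rfl : i = 0 := Nat.lt_one_iff.mp hi
    exact he
  | @cons P Q R l _ hg ih =>
    rw [hg.E_eq, Finset.mem_union, ih]
    constructor
    · rintro (he | ⟨i, hi⟩)
      · exact ⟨0, zero_mem_stepsWith_cons.mpr he⟩
      · exact ⟨i + 1, succ_mem_stepsWith_cons.mpr hi⟩
    · rintro ⟨_ | i, hi⟩
      · exact Or.inl (zero_mem_stepsWith_cons.mp hi)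
      · exact Or.inr ⟨i, succ_mem_stepsWith_cons.mp hi⟩

theorem lt_iff_forall_stepsWith_lt (h : IsGluingList l R) (hdisc : ∀ B ∈ l, B.Discrete)
    {x y : ℕ} (hx : x ∈ R.E) (hy : y ∈ R.E) (hxT : x ∉ R.T) :
    R.lt x y ↔ ∀ i ∈ stepsWith l x, ∀ j ∈ stepsWith l y, i < j := by
  induction h with
  | single P =>
    refine iff_of_false (hdisc P (List.mem_singleton_self P) x y) fun hxy => ?_
    exact lt_irrefl 0 (hxy 0 (zero_mem_stepsWith_cons.mpr hx) 0 (zero_mem_stepsWith_cons.mpr hy))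
  | @cons P Q R l hQ hg ih =>
    rw [forall_stepsWith_cons_lt_iff (((hQ.cons hg).mem_E_iff x).mp hx),
      hg.lt_iff_of_discrete (hdisc P List.mem_cons_self), ← and_assoc,
      ← hg.not_mem_right_iff hx, ← hg.not_mem_left_iff hy]
    have ih := ih fun B hB => hdisc B (List.mem_cons_of_mem P hB)
    by_cases hxQ : x ∈ Q.E
    · simp only [hxQ, not_true_eq_false, false_and, or_false]
      by_cases hyP : y ∈ P.E
      · simp only [hyP, not_true_eq_false, false_and, iff_false]
        intro hxy
        exact (hg.not_mem_left_iff hy).mpr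
          ⟨(Q.lt_dom x y hxy).2, fun hyS => Q.S_min y hyS x hxy⟩ hyP
      · obtain ⟨hyQ, -⟩ := (hg.not_mem_left_iff hy).mp hyP
        simp only [hyP, not_false_eq_true, true_and]
        exact ih hxQ hyQ (hg.T_eq ▸ hxT)
    · have hx' : stepsWith l x = ∅ :=
        Set.not_nonempty_iff_eq_empty.mp ((hQ.mem_E_iff x).not.mp hxQ)
      have hxy : ¬ Q.lt x y := fun hxy => hxQ (Q.lt_dom x y hxy).1
      simp [hxQ, hxy, hx']

theorem teIdx_lt_stIdx_iff (h : IsGluingList l R) (hdisc : ∀ B ∈ l, B.Discrete)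
    {x y : ℕ} (hx : x ∈ R.E) (hy : y ∈ R.E) :
    TeIdx R l x < StIdx R l y ↔ R.lt x y := by
  by_cases hxT : x ∈ R.T
  · simp [TeIdx, hxT, R.T_max x hxT y]
  by_cases hyS : y ∈ R.S
  · simp [StIdx, hyS, R.S_min y hyS x]
  have hsucc : StrictMono fun i : ℕ => (i : EReal) + 1 := fun _ _ hij =>
    EReal.add_lt_add_right_coe (by exact_mod_cast hij) 1
  rw [TeIdx, if_neg hxT, StIdx, if_neg hyS, ← image_stepsWith, ← image_stepsWith,
    sSup_image_lt_sInf_image_iff hsucc (stepsWith_finite l x) ((h.mem_E_iff x).mp hx)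
      (stepsWith_finite l y) ((h.mem_E_iff y).mp hy),
    h.lt_iff_forall_stepsWith_lt hdisc hx hy hxT]

end IsGluingList

end StepIndices

theorem te_lt_st_iff_precedence_general {Λ : Type} (P : Ipomset Λ)
    (l : List (Ipomset Λ)) (hl : IsSparseDecomp l P) :
    ∀ x ∈ P.E, ∀ y ∈ P.E, (TeIdx P l x < StIdx P l y ↔ P.lt x y) := by
  obtain ⟨⟨-, hsteps, hgl⟩, -⟩ := hl
  have hdisc : ∀ B ∈ l, B.Discrete := fun B hB => (hsteps B hB).elim (·.1) (·.1)
  exact fun x hx y hy => hgl.teIdx_lt_stIdx_iff hdisc hx hy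

/-- In the sparse step decomposition of an interval ipomset,
`Te(x) < St(y)` if and only if `x < y` in the precedence order. -/
theorem te_lt_st_iff_precedence {Λ : Type} (P : Ipomset Λ) (hP : P.Interval)
    (l : List (Ipomset Λ)) (hl : IsSparseDecomp l P) :
    ∀ x ∈ P.E, ∀ y ∈ P.E, (TeIdx P l x < StIdx P l y ↔ P.lt x y) :=
  te_lt_st_iff_precedence_general P l hl
end

section
/- Let P be an interval ipomset with sparse step decomposition P = P₁ * ⋯ * Pₙ, and let St, Te be the step indices starting and terminating each event (St(e) = −∞ for sources, Te(e) = +∞ for targets). Then for every i, the step Pᵢ contains precisely those events e of P with St(e) ≤ i ≤ Te(e); moreover St(e) < Te(e) for every event e. -/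
set_option autoImplicit false

namespace SparseAux

variable {Λ : Type}

lemma gl_ne_nil {l : List (Ipomset Λ)} {P : Ipomset Λ} (h : IsGluingList l P) :
    l ≠ [] := by cases h <;> simp

lemma glue_E {l : List (Ipomset Λ)} {P : Ipomset Λ} (h : IsGluingList l P) (e : ℕ) :
    e ∈ P.E ↔ ∃ i : Fin l.length, e ∈ (l.get i).E := by
  induction h with
  | single Q =>
    constructor
    · exact fun he => ⟨⟨0, by simp⟩, he⟩
    · rintro ⟨⟨i, hlt⟩, hi⟩
      obtain rfl : i = 0 := by simpa [Nat.lt_one_iff] using hlt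
      exact hi
  | cons hQ hg ih =>
    rw [hg.E_eq, Finset.mem_union, ih]
    constructor
    · rintro (he | ⟨i, hi⟩)
      · exact ⟨⟨0, by simp⟩, he⟩
      · exact ⟨⟨i + 1, by simpa using Nat.succ_lt_succ i.2⟩, hi⟩
    · rintro ⟨⟨i, hilt⟩, hi⟩
      cases i with
      | zero => exact Or.inl hi
      | succ i => exact Or.inr ⟨⟨i, by simpa using hilt⟩, hi⟩

lemma glue_S {l : List (Ipomset Λ)} {P : Ipomset Λ} (h : IsGluingList l P) :
    ∀ hne : l ≠ [], P.S = (l.head hne).S := by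
  cases h with
  | single Q => intro _; rfl
  | cons hQ hg => intro _; exact hg.S_eq

lemma glue_T {l : List (Ipomset Λ)} {P : Ipomset Λ} (h : IsGluingList l P) :
    ∀ hne : l ≠ [], P.T = (l.getLast hne).T := by
  induction h with
  | single Q => intro _; rfl
  | cons hQ hg ih =>
    intro hne
    rw [hg.T_eq, ih (gl_ne_nil hQ)]
    congr 1
    exact (List.getLast_cons (gl_ne_nil hQ)).symm

lemma glue_interface {l : List (Ipomset Λ)} {P : Ipomset Λ} (h : IsGluingList l P) :
    ∀ i (hi : i + 1 < l.length),
      (l.get ⟨i, Nat.lt_of_succ_lt hi⟩).T = (l.get ⟨i + 1, hi⟩).S := by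
  induction h with
  | single Q => intro i hi; simp at hi
  | cons hQ hg ih =>
    rename_i P' Q R l' 
    intro i hi
    cases i with
    | zero =>
      show P'.T = _
      rw [hg.match_TS, glue_S hQ (gl_ne_nil hQ)]
      congr 1
      rw [List.head_eq_getElem_zero (gl_ne_nil hQ)]
      simp [List.get_eq_getElem]
    | succ i => exact ih i (by simpa using hi)

lemma glue_consec {l : List (Ipomset Λ)} {P : Ipomset Λ} (h : IsGluingList l P) :
    ∀ e i j k (hi : i < l.length) (hj : j < l.length) (hk : k < l.length),
      i ≤ k → k ≤ j → e ∈ (l.get ⟨i, hi⟩).E → e ∈ (l.get ⟨j, hj⟩).E →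
      e ∈ (l.get ⟨k, hk⟩).E := by
  induction h with
  | single Q =>
    intro e i j k hi hj hk _ _ hei _
    simp only [List.length_singleton] at hi hk
    obtain rfl : i = 0 := by omega
    obtain rfl : k = 0 := by omega
    exact hei
  | cons hQ hg ih =>
    rename_i P' Q R l'
    intro e i j k hi hj hk hik hkj hei hej
    cases k with
    | zero =>
      obtain rfl : i = 0 := Nat.le_zero.mp hik
      exact hei
    | succ k =>
      cases j with
      | zero => omega
      | succ j =>
        cases i with
        | succ i =>
          exact ih e i j k (by simpa using hi) (by simpa using hj) (by simpa using hk)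
            (by omega) (by omega) hei hej
        | zero =>
          have heQ : e ∈ Q.E := (glue_E hQ e).2 ⟨⟨j, by simpa using hj⟩, hej⟩
          have heT : e ∈ P'.T := hg.inter e hei heQ
          have heS : e ∈ Q.S := hg.match_TS ▸ heT
          have h0 : e ∈ (l'.get ⟨0, by
              rcases List.exists_cons_of_ne_nil (gl_ne_nil hQ) with ⟨a, t, rfl⟩; simp⟩).E := by
            apply Ipomset.S_sub
            rw [glue_S hQ (gl_ne_nil hQ)] at heS
            rw [List.head_eq_getElem_zero (gl_ne_nil hQ)] at heS
            simpa [List.get_eq_getElem] using heS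
          exact ih e 0 j k _ (by simpa using hj) (by simpa using hk) (by omega) (by omega)
            h0 hej

end SparseAux

/-- In the sparse step decomposition of an interval ipomset, the
`i`-th step contains precisely the events `e` with `St(e) ≤ i ≤ Te(e)`; moreover
`St(e) < Te(e)` for every event `e`. -/
theorem step_contains_iff_st_le_te {Λ : Type} (P : Ipomset Λ) (hP : P.Interval)
    (l : List (Ipomset Λ)) (hl : IsSparseDecomp l P) :
    (∀ ℓ : Fin l.length, ∀ e : ℕ,
      (e ∈ (l.get ℓ).E ↔ e ∈ P.E ∧ StIdx P l e ≤ ((ℓ : ℕ) : EReal) + 1 ∧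
        ((ℓ : ℕ) : EReal) + 1 ≤ TeIdx P l e)) ∧
    (∀ e ∈ P.E, StIdx P l e < TeIdx P l e) := by
  classical
  obtain ⟨⟨hne, hsteps, hglue⟩, -⟩ := hl
  set pr : ℕ → ℕ → Prop := fun e i => ∃ h : i < l.length, e ∈ (l.get ⟨i, h⟩).E with hpr
  have hEiff : ∀ e, e ∈ P.E ↔ ∃ i, pr e i := by
    intro e
    rw [SparseAux.glue_E hglue e]
    exact ⟨fun ⟨ℓ, h⟩ => ⟨ℓ.1, ℓ.2, h⟩, fun ⟨i, h, hm⟩ => ⟨⟨i, h⟩, hm⟩⟩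
  have getmin : ∀ e, (∃ i, pr e i) → ∃ m, pr e m ∧ ∀ i, pr e i → m ≤ i := fun e hex =>
    ⟨Nat.find hex, Nat.find_spec hex, fun i hi => Nat.find_min' hex hi⟩
  have getmax : ∀ e, (∃ i, pr e i) → ∃ M, pr e M ∧ ∀ i, pr e i → i ≤ M := by
    intro e hex
    obtain ⟨i0, hi0⟩ := hex
    exact ⟨Nat.findGreatest (pr e) l.length, Nat.findGreatest_spec (le_of_lt hi0.1) hi0,
      fun i hi => Nat.le_findGreatest (le_of_lt hi.1) hi⟩
  have hStEq : ∀ e, e ∉ P.S → ∀ m : ℕ, pr e m → (∀ i, pr e i → m ≤ i) →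
      StIdx P l e = (m : EReal) + 1 := by
    intro e he m hm hmin
    rw [StIdx, if_neg he]
    apply le_antisymm
    · exact sInf_le ⟨⟨m, hm.1⟩, hm.2, rfl⟩
    · apply le_sInf
      rintro x ⟨ℓ, hmem, rfl⟩
      have h1 : m ≤ (ℓ : ℕ) := hmin ℓ ⟨ℓ.2, hmem⟩
      norm_cast
      omega
  have hTeEq : ∀ e, e ∉ P.T → ∀ M : ℕ, pr e M → (∀ i, pr e i → i ≤ M) →
      TeIdx P l e = (M : EReal) + 1 := by
    intro e he M hM hmax
    rw [TeIdx, if_neg he]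
    apply le_antisymm
    · apply sSup_le
      rintro x ⟨ℓ, hmem, rfl⟩
      have h1 : (ℓ : ℕ) ≤ M := hmax ℓ ⟨ℓ.2, hmem⟩
      norm_cast
      omega
    · exact le_sSup ⟨⟨M, hM.1⟩, hM.2, rfl⟩
  have h0len : 0 < l.length := List.length_pos_iff.2 hne
  have hfirst : ∀ e, e ∈ P.S → pr e 0 := by
    intro e he
    refine ⟨h0len, (l.get ⟨0, h0len⟩).S_sub ?_⟩
    rw [SparseAux.glue_S hglue hne] at he
    rw [List.head_eq_getElem_zero hne] at he
    simpa [List.get_eq_getElem] using he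
  have hlast : ∀ e, e ∈ P.T → pr e (l.length - 1) := by
    intro e he
    refine ⟨by omega, (l.get ⟨l.length - 1, by omega⟩).T_sub ?_⟩
    rw [SparseAux.glue_T hglue hne, List.getLast_eq_getElem] at he
    simpa [List.get_eq_getElem] using he
  have hStle : ∀ e (ℓ : Fin l.length), e ∈ (l.get ℓ).E →
      StIdx P l e ≤ ((ℓ : ℕ) : EReal) + 1 := by
    intro e ℓ hmem
    by_cases hS : e ∈ P.S
    · rw [StIdx, if_pos hS]; exact bot_le
    · rw [StIdx, if_neg hS]; exact sInf_le ⟨ℓ, hmem, rfl⟩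
  have hTege : ∀ e (ℓ : Fin l.length), e ∈ (l.get ℓ).E →
      ((ℓ : ℕ) : EReal) + 1 ≤ TeIdx P l e := by
    intro e ℓ hmem
    by_cases hT : e ∈ P.T
    · rw [TeIdx, if_pos hT]; exact le_top
    · rw [TeIdx, if_neg hT]; exact le_sSup ⟨ℓ, hmem, rfl⟩
  constructor
  · intro ℓ e
    have hℓlt : (ℓ : ℕ) < l.length := ℓ.2
    constructor
    · intro hmem
      exact ⟨(hEiff e).2 ⟨ℓ.1, ℓ.2, hmem⟩, hStle e ℓ hmem, hTege e ℓ hmem⟩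
    · rintro ⟨heE, h1, h2⟩
      have hex : ∃ i, pr e i := (hEiff e).1 heE
      by_cases hS : e ∈ P.S <;> by_cases hT : e ∈ P.T
      · have hf := hfirst e hS
        have hl' := hlast e hT
        exact SparseAux.glue_consec hglue e 0 (l.length - 1) ℓ.1 h0len (by omega) ℓ.2
          (by omega) (by omega) hf.2 hl'.2
      · obtain ⟨M, hMp, hMmax⟩ := getmax e hex
        rw [hTeEq e hT M hMp hMmax] at h2
        have hℓM : (ℓ : ℕ) ≤ M := by norm_cast at h2; omega
        have hf := hfirst e hS
        exact SparseAux.glue_consec hglue e 0 M ℓ.1 h0len hMp.1 ℓ.2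
          (by omega) hℓM hf.2 hMp.2
      · obtain ⟨m, hmp, hmmin⟩ := getmin e hex
        rw [hStEq e hS m hmp hmmin] at h1
        have hmℓ : m ≤ (ℓ : ℕ) := by norm_cast at h1; omega
        have hl' := hlast e hT
        exact SparseAux.glue_consec hglue e m (l.length - 1) ℓ.1 hmp.1 (by omega) ℓ.2
          hmℓ (by omega) hmp.2 hl'.2
      · obtain ⟨m, hmp, hmmin⟩ := getmin e hex
        obtain ⟨M, hMp, hMmax⟩ := getmax e hex
        rw [hStEq e hS m hmp hmmin] at h1
        rw [hTeEq e hT M hMp hMmax] at h2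
        have hmℓ : m ≤ (ℓ : ℕ) := by norm_cast at h1; omega
        have hℓM : (ℓ : ℕ) ≤ M := by norm_cast at h2; omega
        exact SparseAux.glue_consec hglue e m M ℓ.1 hmp.1 hMp.1 ℓ.2 hmℓ hℓM hmp.2 hMp.2
  · intro e heE
    have hex : ∃ i, pr e i := (hEiff e).1 heE
    by_cases hS : e ∈ P.S <;> by_cases hT : e ∈ P.T
    · rw [StIdx, if_pos hS, TeIdx, if_pos hT]; exact bot_lt_top
    · obtain ⟨M, hMp, hMmax⟩ := getmax e hex
      rw [StIdx, if_pos hS, hTeEq e hT M hMp hMmax]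
      norm_cast
      exact bot_lt_iff_ne_bot.2 (EReal.natCast_ne_bot _)
    · obtain ⟨m, hmp, hmmin⟩ := getmin e hex
      rw [TeIdx, if_pos hT, hStEq e hS m hmp hmmin]
      norm_cast
      exact lt_top_iff_ne_top.2 (EReal.natCast_ne_top _)
    · obtain ⟨m, hmp, hmmin⟩ := getmin e hex
      obtain ⟨M, hMp, hMmax⟩ := getmax e hex
      rw [hStEq e hS m hmp hmmin, hTeEq e hT M hMp hMmax]
      have hmM : m < M := by
        have hstep := hsteps (l.get ⟨m, hmp.1⟩) (List.get_mem l ⟨m, hmp.1⟩)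
        rcases hstep with hstep | hstep
        · -- starter: all events are targets; so e also lies in the next step
          have heT : e ∈ (l.get ⟨m, hmp.1⟩).T := by rw [hstep.2]; exact hmp.2
          have hmlen : m < l.length := hmp.1
          have hmlt : m + 1 < l.length := by
            by_contra hcon
            apply hT
            rw [SparseAux.glue_T hglue hne, List.getLast_eq_getElem]
            have hme : l.length - 1 = m := by omega
            simp only [hme]
            simpa [List.get_eq_getElem] using heT
          have hnext : e ∈ (l.get ⟨m + 1, hmlt⟩).E := by
            apply (l.get ⟨m + 1, hmlt⟩).S_sub
            rw [← SparseAux.glue_interface hglue m hmlt]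
            exact heT
          have := hMmax (m + 1) ⟨hmlt, hnext⟩
          omega
        · -- terminator: all events are sources; e would lie in the previous step
          exfalso
          have heS : e ∈ (l.get ⟨m, hmp.1⟩).S := by rw [hstep.2]; exact hmp.2
          match m, hmp, heS with
          | 0, hmp, heS =>
            apply hS
            rw [SparseAux.glue_S hglue hne, List.head_eq_getElem_zero hne]
            simpa [List.get_eq_getElem] using heS
          | (m' + 1), hmp, heS =>
            have hprev : e ∈ (l.get ⟨m', Nat.lt_of_succ_lt hmp.1⟩).E := by
              apply (l.get ⟨m', Nat.lt_of_succ_lt hmp.1⟩).T_sub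
              rw [SparseAux.glue_interface hglue m' hmp.1]
              exact heS
            have := hmmin m' ⟨Nat.lt_of_succ_lt hmp.1, hprev⟩
            omega
      norm_cast
      omega
end
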